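/- For nonnegative integers n ≤ N and a not a nonpositive integer, the terminating series satisfies the degenerate Pfaff transformation 2F1(-n, a; -N; z) = (1-z)^n · 2F1(-n, -a-N; -N; z/(z-1)), where 2F1(-n, a; -N; z) = ∑_{k=0}^n ((-n)_k(a)_k/((-N)_k k!)) z^k. -/

import Mathlib

open Finset

noncomputable def poch (x : ℂ) (k : ℕ) : ℂ := (ascPochhammer ℂ k).eval x

/-- Terminating Gauss hypergeometric series `2F1(-n, b; c; z)` as a finite sum. -/
noncomputable def hyp (n : ℕ) (b c : ℂ) (z : ℂ) : ℂ :=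
  ∑ k ∈ Finset.range (n + 1),
    poch (-(n : ℂ)) k * poch b k / (poch c k * (Nat.factorial k : ℂ)) * z ^ k

/-!
Pfaff's transformation holds for every `c` with `(c)_n ≠ 0`. Since `(-n)_k / k! = (-1)^k C(n,k)`,
both sides are binomial-type sums; expanding `(1 - z)^(n - j)` on the right and collecting powers
of `z`, the coefficient of `C(n,k) (-z)^k` becomes `2F1(-k, c - b; c; 1)`, which Chu–Vandermonde
evaluates to `(b)_k / (c)_k`. Chu–Vandermonde in turn is Vandermonde's convolution for falling
factorials, after splitting `(c)_k = (c)_j (c + j)_(k - j)`. For `c = -N` with `n ≤ N` one has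
`(-N)_n = (-1)^n N!/(N - n)! ≠ 0`.
-/

open Polynomial Nat

theorem descPochhammer_eval_add {R : Type*} [CommRing R] (x y : R) (k : ℕ) :
    (descPochhammer R k).eval (x + y) = ∑ ij ∈ antidiagonal k,
      k.choose ij.1 * ((descPochhammer R ij.1).eval x * (descPochhammer R ij.2).eval y) := by
  have h (m : ℕ) (r : R) : (descPochhammer R m).eval r = (descPochhammer ℤ m).smeval r := by
    rw [← descPochhammer_map (algebraMap ℤ R), eval_map_algebraMap, aeval_eq_smeval]
  simpa only [h] using Ring.descPochhammer_smeval_add k (Commute.all x y)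

theorem sum_choose_mul_pow_mul_add_pow {R : Type*} [CommSemiring R] (d : ℕ → R) (x y : R)
    (n : ℕ) :
    ∑ j ∈ range (n + 1), n.choose j * d j * x ^ j * (x + y) ^ (n - j) =
      ∑ k ∈ range (n + 1),
        n.choose k * (∑ j ∈ range (k + 1), k.choose j * d j) * x ^ k * y ^ (n - k) := by
  set f : ℕ → ℕ → R := fun j i => n.choose j * d j * x ^ j * (x ^ i * y ^ (n - j - i) *
    (n - j).choose i)
  calc _ = ∑ j ∈ range (n + 1), ∑ i ∈ range (n + 1 - j), f j i := by
        refine sum_congr rfl fun j hj => ?_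
        have hjn := mem_range.mp hj
        rw [add_pow, mul_sum, show n - j + 1 = n + 1 - j by omega]
    _ = ∑ k ∈ range (n + 1), ∑ j ∈ range (k + 1), f j (k - j) :=
        (sum_range_diag_flip _ _).symm
    _ = _ := by
        refine sum_congr rfl fun k hk => ?_
        rw [mul_sum, sum_mul, sum_mul]
        refine sum_congr rfl fun j hj => ?_
        have hjk : j ≤ k := mem_range_succ_iff.mp hj
        have hchoose : ((n.choose j : R) * (n - j).choose (k - j)) = n.choose k * k.choose j := by
          rw [← Nat.cast_mul, ← Nat.cast_mul, Nat.choose_mul hjk]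
        dsimp only [f]
        rw [show n - j - (k - j) = n - k by omega,
          show x ^ k = x ^ j * x ^ (k - j) by rw [← pow_add, Nat.add_sub_cancel' hjk]]
        calc _ = ((n.choose j : R) * (n - j).choose (k - j)) *
              (d j * x ^ j * x ^ (k - j) * y ^ (n - k)) := by ring
          _ = _ := by rw [hchoose]; ring

theorem poch_add (x : ℂ) (j m : ℕ) : poch x (j + m) = poch x j * poch (x + j) m := by
  simp [poch, ← ascPochhammer_mul, eval_comp]

theorem poch_ne_zero_of_le {c : ℂ} {j k : ℕ} (hjk : j ≤ k) (hc : poch c k ≠ 0) :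
    poch c j ≠ 0 := fun h0 => hc (by rw [← Nat.add_sub_cancel' hjk, poch_add, h0, zero_mul])

theorem poch_eq_descPochhammer_eval (x : ℂ) (m : ℕ) :
    poch x m = (descPochhammer ℂ m).eval (x + m - 1) := by
  rw [descPochhammer_eval_eq_ascPochhammer, poch]
  ring_nf

theorem poch_neg_natCast (n k : ℕ) : poch (-(n : ℂ)) k = (-1) ^ k * n.descFactorial k := by
  rw [poch, ascPochhammer_eval_neg_eq_descPochhammer, descPochhammer_eval_eq_descFactorial]

theorem hyp_eq_sum_choose (n : ℕ) (b c z : ℂ) :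
    hyp n b c z = ∑ k ∈ range (n + 1), n.choose k * (poch b k / poch c k * (-z) ^ k) := by
  refine sum_congr rfl fun k _ => ?_
  have hk : (k ! : ℂ) ≠ 0 := Nat.cast_ne_zero.2 k.factorial_ne_zero
  rw [poch_neg_natCast, Nat.descFactorial_eq_factorial_mul_choose, neg_pow z]
  push_cast
  field_simp

theorem hyp_chu_vandermonde (k : ℕ) (b c : ℂ) (hc : poch c k ≠ 0) :
    hyp k b c 1 = poch (c - b) k / poch c k := by
  rw [hyp_eq_sum_choose, eq_div_iff hc, sum_mul, poch_eq_descPochhammer_eval (c - b),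
    show c - b + k - 1 = -b + (c + k - 1) by ring, descPochhammer_eval_add,
    Nat.sum_antidiagonal_eq_sum_range_succ (fun i j => (k.choose i : ℂ) *
      ((descPochhammer ℂ i).eval (-b) * (descPochhammer ℂ j).eval (c + k - 1)))]
  refine sum_congr rfl fun j hj => ?_
  have hjk : j ≤ k := mem_range_succ_iff.mp hj
  have hcj : poch c j ≠ 0 := poch_ne_zero_of_le hjk hc
  have hsplit : poch c k = poch c j * (descPochhammer ℂ (k - j)).eval (c + k - 1) := by
    rw [← Nat.add_sub_cancel' hjk, poch_add, poch_eq_descPochhammer_eval (c + j),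
      Nat.add_sub_cancel' hjk]
    congr 2
    push_cast [Nat.cast_sub hjk]
    ring
  have hneg : (descPochhammer ℂ j).eval (-b) = (-1) ^ j * poch b j := by
    rw [poch, ← neg_neg b, ascPochhammer_eval_neg_eq_descPochhammer, neg_neg, ← mul_assoc,
      ← mul_pow, neg_one_mul, neg_neg, one_pow, one_mul]
  rw [hsplit, hneg]
  field_simp

theorem hyp_pfaff (n : ℕ) (b c z : ℂ) (hc : poch c n ≠ 0) (hz : z ≠ 1) :
    hyp n b c z = (1 - z) ^ n * hyp n (c - b) c (z / (z - 1)) := by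
  have hterm : ∀ j ∈ range (n + 1),
      (1 - z) ^ n * (n.choose j * (poch (c - b) j / poch c j * (-(z / (z - 1))) ^ j)) =
        n.choose j * (poch (c - b) j / poch c j * (-1) ^ j) * (-z) ^ j * (-z + 1) ^ (n - j) := by
    intro j hj
    have hw : -(z / (z - 1)) * (1 - z) = -1 * -z := by
      field_simp [sub_ne_zero.2 hz]
      ring
    rw [← pow_mul_pow_sub (1 - z) (mem_range_succ_iff.mp hj)]
    calc _ = n.choose j * (poch (c - b) j / poch c j) * (-(z / (z - 1)) * (1 - z)) ^ j *
          (1 - z) ^ (n - j) := by rw [mul_pow]; ring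
      _ = _ := by rw [hw, mul_pow]; ring
  rw [hyp_eq_sum_choose, hyp_eq_sum_choose, mul_sum, sum_congr rfl hterm,
    sum_choose_mul_pow_mul_add_pow]
  refine sum_congr rfl fun k hk => ?_
  rw [← hyp_eq_sum_choose k (c - b) c 1,
    hyp_chu_vandermonde k _ _ (poch_ne_zero_of_le (mem_range_succ_iff.mp hk) hc),
    sub_sub_cancel, one_pow]
  ring

theorem pfaff_degenerate_general (n N : ℕ) (hnN : n ≤ N) (a : ℂ) (z : ℂ) (hz : z ≠ 1) :
    hyp n a (-(N : ℂ)) z = (1 - z) ^ n * hyp n (-a - N) (-(N : ℂ)) (z / (z - 1)) := by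
  have hN : poch (-(N : ℂ)) n ≠ 0 := by
    rw [poch_neg_natCast]
    exact mul_ne_zero (pow_ne_zero _ (by norm_num))
      (Nat.cast_ne_zero.2 (Nat.descFactorial_eq_zero_iff_lt.not.2 hnN.not_gt))
  rw [hyp_pfaff n a _ z hN hz, show -(N : ℂ) - a = -a - N by ring]

theorem pfaff_degenerate (n N : ℕ) (hnN : n ≤ N) (a : ℂ)
    (ha : ∀ m : ℕ, a ≠ -(m : ℂ)) (z : ℂ) (hz : z ≠ 1) :
    hyp n a (-(N : ℂ)) z = (1 - z) ^ n * hyp n (-a - N) (-(N : ℂ)) (z / (z - 1)) :=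
  pfaff_degenerate_general n N hnN a z hz
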